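/- For all nonnegative integers k and m, the function f : ℍ∖ℝ → ℍ defined by f(q) := H_{k,m}(q,q̄) satisfies (□f)(q) = m·f(q) for every q ∈ ℍ∖ℝ; that is, the quaternionic Hermite polynomials of second index m are eigenfunctions of □ with eigenvalue m. -/

import Mathlib

open MeasureTheory Quaternion

noncomputable section

/-- two-argument quaternionic Hermite polynomial `H_{m,n}(a,b)` -/
def qHermite2 (m n : ℕ) (a b : ℍ[ℝ]) : ℍ[ℝ] :=
  ∑ j ∈ Finset.range (min m n + 1),
    (((-1 : ℝ) ^ j * (Nat.factorial m * Nat.factorial n) /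
        (Nat.factorial j * (Nat.factorial (m - j) * Nat.factorial (n - j)))) : ℝ) •
      (a ^ (m - j) * b ^ (n - j))

/-- quaternionic Hermite polynomial `H_{m,n}(q, q̄)` -/
def qHermite (m n : ℕ) (q : ℍ[ℝ]) : ℍ[ℝ] := qHermite2 m n q (star q)

/-- the sliced operator `□` at `q = x + yI`, `x = Re q`, `y = |Im q|`, `I = Im q/|Im q|`;
the partial derivatives of the slice function `g_I(x,y) = f(x + yI)` are taken through
the one-variable sections. -/
def Box (f : ℍ[ℝ] → ℍ[ℝ]) (q : ℍ[ℝ]) : ℍ[ℝ] :=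
  let x : ℝ := q.re
  let y : ℝ := ‖q.im‖
  let I : ℍ[ℝ] := ‖q.im‖⁻¹ • q.im
  (-(1 / 4 : ℝ)) • (deriv (deriv fun u : ℝ => f ((u : ℍ[ℝ]) + y • I)) x +
      deriv (deriv fun v : ℝ => f ((x : ℍ[ℝ]) + v • I)) y) +
    (1 / 2 : ℝ) • (x • deriv (fun u : ℝ => f ((u : ℍ[ℝ]) + y • I)) x +
      y • deriv (fun v : ℝ => f ((x : ℍ[ℝ]) + v • I)) y) +
    (1 / 2 : ℝ) • (I * (x • deriv (fun v : ℝ => f ((x : ℍ[ℝ]) + v • I)) y -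
      y • deriv (fun u : ℝ => f ((u : ℍ[ℝ]) + y • I)) x))

/-!
On the slice through `q = x + yI`, put `z = x + yI` and `z̄ = x - yI`; they commute with each
other and with `I`, and `∂_x = ∂_z + ∂_z̄`, `∂_y = I (∂_z - ∂_z̄)`. Hence `□ = -∂_z ∂_z̄ + z̄ ∂_z̄`
there, so `□ (z^a z̄^b) = b z^a z̄^b - a b z^(a-1) z̄^(b-1)`. As `□` is linear on `C²` functions,
`□ H_{k,m}` can be computed termwise, and the recursion
`(j + 1) c_{j+1} = -(k - j)(m - j) c_j` of the Hermite coefficients makes the lower-order terms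
cancel, leaving `m H_{k,m}`.
-/

theorem HasDerivAt.pow_of_commute {𝕜 A : Type*} [NontriviallyNormedField 𝕜] [NormedRing A]
    [NormedAlgebra 𝕜 A] {f : 𝕜 → A} {f' : A} {x : 𝕜} (h : HasDerivAt f f' x)
    (hc : Commute f' (f x)) (n : ℕ) :
    HasDerivAt (fun t => f t ^ n) ((n : 𝕜) • (f' * f x ^ (n - 1))) x := by
  have hterm : ∀ i ∈ Finset.range n, f x ^ (n.pred - i) * f' * f x ^ i = f' * f x ^ (n - 1) := by
    intro i hi
    rw [← (hc.pow_right _).eq, mul_assoc, ← pow_add, Nat.pred_eq_sub_one,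
      Nat.sub_add_cancel (by simp at hi; omega)]
  convert h.fun_pow' n using 1
  rw [Finset.sum_congr rfl hterm, Finset.sum_const, Finset.card_range, Nat.cast_smul_eq_nsmul]

theorem deriv_deriv_fun_add {𝕜 E : Type*} [NontriviallyNormedField 𝕜] [NormedAddCommGroup E]
    [NormedSpace 𝕜 E] {s₁ s₂ : 𝕜 → E} (h₁ : ContDiff 𝕜 2 s₁) (h₂ : ContDiff 𝕜 2 s₂) (x : 𝕜) :
    deriv (deriv fun t => s₁ t + s₂ t) x = deriv (deriv s₁) x + deriv (deriv s₂) x := by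
  have hderiv : deriv (fun t => s₁ t + s₂ t) = fun t => deriv s₁ t + deriv s₂ t :=
    funext fun t =>
      deriv_fun_add (h₁.differentiable two_ne_zero t) (h₂.differentiable two_ne_zero t)
  rw [hderiv, deriv_fun_add (h₁.differentiable_deriv_two x) (h₂.differentiable_deriv_two x)]

namespace Quaternion

theorem hasDerivAt_coe (x : ℝ) : HasDerivAt (fun u : ℝ => (u : ℍ[ℝ])) 1 x := by
  simpa [coe_algebraMapCLM, algebraMap_def] using (algebraMapCLM ℝ ℍ[ℝ]).hasDerivAt (x := x)

theorem contDiff_coe {n : WithTop ℕ∞} : ContDiff ℝ n (fun u : ℝ => (u : ℍ[ℝ])) := by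
  simpa [coe_algebraMapCLM, algebraMap_def] using (algebraMapCLM ℝ ℍ[ℝ]).contDiff (n := n)

theorem contDiff_star {n : WithTop ℕ∞} : ContDiff ℝ n (star : ℍ[ℝ] → ℍ[ℝ]) :=
  (LinearMap.toContinuousLinearMap
    ({ toFun := star, map_add' := star_add, map_smul' := star_smul } : ℍ[ℝ] →ₗ[ℝ] ℍ[ℝ])).contDiff

theorem star_inv_norm_smul_im (q : ℍ[ℝ]) : star (‖q.im‖⁻¹ • q.im) = -(‖q.im‖⁻¹ • q.im) := by
  rw [star_smul, star_im, smul_neg]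

theorem inv_norm_smul_im_mul_self {q : ℍ[ℝ]} (hq : q.im ≠ 0) :
    (‖q.im‖⁻¹ • q.im) * (‖q.im‖⁻¹ • q.im) = -1 := by
  have hnorm : ‖q.im‖ ≠ 0 := norm_ne_zero_iff.mpr hq
  rw [smul_mul_smul_comm, ← pow_two q.im, im_sq, normSq_eq_norm_mul_self, smul_neg,
    ← coe_mul_eq_smul, ← coe_mul,
    show ‖q.im‖⁻¹ * ‖q.im‖⁻¹ * (‖q.im‖ * ‖q.im‖) = 1 by field_simp, coe_one]

theorem re_add_norm_smul_inv_norm_smul_im (q : ℍ[ℝ]) :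
    (q.re : ℍ[ℝ]) + ‖q.im‖ • (‖q.im‖⁻¹ • q.im) = q := by
  rcases eq_or_ne q.im 0 with h | h
  · simpa [h] using re_add_im q
  · rw [smul_smul, mul_inv_cancel₀ (norm_ne_zero_iff.mpr h), one_smul, re_add_im]

end Quaternion

def starMonomial (a b : ℕ) (p : ℍ[ℝ]) : ℍ[ℝ] := p ^ a * star p ^ b

theorem contDiff_starMonomial (a b : ℕ) {n : WithTop ℕ∞} : ContDiff ℝ n (starMonomial a b) :=
  (contDiff_id.pow a).mul (Quaternion.contDiff_star.pow b)

theorem natCast_smul_starMonomial (a b : ℕ) (p : ℍ[ℝ]) :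
    (b : ℝ) • starMonomial a b p = (b : ℝ) • (star p * starMonomial a (b - 1) p) := by
  rcases Nat.eq_zero_or_pos b with rfl | hb
  · simp
  · rw [starMonomial, starMonomial, ← mul_assoc, (star_comm_self.pow_right a).eq, mul_assoc,
      ← pow_succ', Nat.sub_add_cancel hb]

theorem hasDerivAt_starMonomial_re_slice (a b : ℕ) (c : ℍ[ℝ]) (x : ℝ) :
    HasDerivAt (fun u : ℝ => starMonomial a b (u + c))
      ((a : ℝ) • starMonomial (a - 1) b (x + c) + (b : ℝ) • starMonomial a (b - 1) (x + c)) x := by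
  have hz := ((Quaternion.hasDerivAt_coe x).add_const c).pow_of_commute (Commute.one_left _) a
  have hw := ((Quaternion.hasDerivAt_coe x).add_const (star c)).pow_of_commute
    (Commute.one_left _) b
  have hslice : (fun u : ℝ => starMonomial a b (u + c))
      = fun u : ℝ => ((u : ℍ[ℝ]) + c) ^ a * ((u : ℍ[ℝ]) + star c) ^ b := by
    ext u <;> simp [starMonomial]
  rw [hslice]
  refine (hz.fun_mul hw).congr_deriv ?_
  simp [starMonomial]

theorem hasDerivAt_starMonomial_im_slice (a b : ℕ) {I : ℍ[ℝ]} (hI : star I = -I) (x y : ℝ) :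
    HasDerivAt (fun v : ℝ => starMonomial a b (x + v • I))
      (I * ((a : ℝ) • starMonomial (a - 1) b (x + y • I)
        - (b : ℝ) • starMonomial a (b - 1) (x + y • I))) y := by
  have hI_comm : ∀ v : ℝ, Commute I ((x : ℍ[ℝ]) + v • I) := fun v =>
    (Quaternion.coe_commute x I).symm.add_right ((Commute.refl I).smul_right v)
  have hz := (((hasDerivAt_id y).smul_const I).const_add (x : ℍ[ℝ])).pow_of_commute
    (by simpa using hI_comm y) a
  have hw := (((hasDerivAt_id y).smul_const (-I)).const_add (x : ℍ[ℝ])).pow_of_commute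
    (by simpa using (hI_comm (-y)).neg_left) b
  have hslice : (fun v : ℝ => starMonomial a b (x + v • I))
      = fun v : ℝ => ((x : ℍ[ℝ]) + v • I) ^ a * ((x : ℍ[ℝ]) + v • -I) ^ b := by
    ext v <;> simp [starMonomial, hI]
  rw [hslice]
  refine (hz.fun_mul hw).congr_deriv ?_
  simp only [starMonomial, star_add, Quaternion.star_coe, Quaternion.star_smul, hI, id, one_smul]
  have hcomm : ((x : ℍ[ℝ]) + y • I) ^ a * I = I * ((x : ℍ[ℝ]) + y • I) ^ a :=
    ((hI_comm y).pow_right a).eq.symm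
  simp only [mul_add, mul_smul_comm, smul_mul_assoc, neg_mul, mul_neg, ← mul_assoc, hcomm,
    smul_neg, sub_eq_add_neg]

theorem Box_add {f g : ℍ[ℝ] → ℍ[ℝ]} (hf : ContDiff ℝ 2 f) (hg : ContDiff ℝ 2 g) (q : ℍ[ℝ]) :
    Box (f + g) q = Box f q + Box g q := by
  have re_slice : ∀ {h : ℍ[ℝ] → ℍ[ℝ]}, ContDiff ℝ 2 h → ∀ c : ℍ[ℝ],
      ContDiff ℝ 2 fun u : ℝ => h (u + c) := fun hh c =>
    hh.comp (Quaternion.contDiff_coe.add contDiff_const)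
  have im_slice : ∀ {h : ℍ[ℝ] → ℍ[ℝ]}, ContDiff ℝ 2 h → ∀ c d : ℍ[ℝ],
      ContDiff ℝ 2 fun v : ℝ => h (c + v • d) := fun hh c d =>
    hh.comp (contDiff_const.add (contDiff_id.smul contDiff_const))
  simp only [Box, Pi.add_apply]
  rw [deriv_deriv_fun_add (re_slice hf _) (re_slice hg _),
    deriv_deriv_fun_add (im_slice hf _ _) (im_slice hg _ _),
    deriv_fun_add ((re_slice hf _).differentiable two_ne_zero _)
      ((re_slice hg _).differentiable two_ne_zero _),
    deriv_fun_add ((im_slice hf _ _).differentiable two_ne_zero _)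
      ((im_slice hg _ _).differentiable two_ne_zero _)]
  simp only [smul_add, mul_add, smul_sub, mul_sub]
  abel

theorem Box_const_smul (c : ℝ) (f : ℍ[ℝ] → ℍ[ℝ]) (q : ℍ[ℝ]) : Box (c • f) q = c • Box f q := by
  have hderiv : ∀ F : ℝ → ℍ[ℝ], deriv (fun t => c • F t) = fun t => c • deriv F t :=
    fun F => funext fun _ => deriv_fun_const_smul_field c F
  simp only [Box, Pi.smul_apply, hderiv, mul_sub, mul_smul_comm]
  module

theorem Box_sum {ι : Type*} (s : Finset ι) (f : ι → ℍ[ℝ] → ℍ[ℝ])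
    (hf : ∀ i ∈ s, ContDiff ℝ 2 (f i)) (q : ℍ[ℝ]) :
    Box (∑ i ∈ s, f i) q = ∑ i ∈ s, Box (f i) q := by
  classical
  induction s using Finset.induction_on with
  | empty => simp [Box]
  | insert i s hi ih =>
    have hs : ∀ j ∈ s, ContDiff ℝ 2 (f j) := fun j hj => hf j (Finset.mem_insert_of_mem hj)
    have hsum : ContDiff ℝ 2 (∑ j ∈ s, f j) := by
      rw [Finset.sum_fn]; exact ContDiff.sum hs
    rw [Finset.sum_insert hi, Finset.sum_insert hi,
      Box_add (hf i (Finset.mem_insert_self i s)) hsum, ih hs]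

theorem Box_starMonomial (a b : ℕ) {q : ℍ[ℝ]} (hq : q.im ≠ 0) :
    Box (starMonomial a b) q
      = (b : ℝ) • starMonomial a b q - ((a : ℝ) * b) • starMonomial (a - 1) (b - 1) q := by
  simp only [Box]
  set x := q.re
  set y := ‖q.im‖
  set I := y⁻¹ • q.im
  have hI2 : I * I = -1 := Quaternion.inv_norm_smul_im_mul_self hq
  have hIstar : star I = -I := Quaternion.star_inv_norm_smul_im q
  have hq_slice : (x : ℍ[ℝ]) + y • I = q := Quaternion.re_add_norm_smul_inv_norm_smul_im q
  have du : deriv (fun u : ℝ => starMonomial a b (u + y • I)) = fun u : ℝ =>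
      (a : ℝ) • starMonomial (a - 1) b (u + y • I) + (b : ℝ) • starMonomial a (b - 1) (u + y • I) :=
    funext fun u => (hasDerivAt_starMonomial_re_slice a b _ u).deriv
  have dv : deriv (fun v : ℝ => starMonomial a b (x + v • I)) = fun v : ℝ =>
      I * ((a : ℝ) • starMonomial (a - 1) b (x + v • I)
        - (b : ℝ) • starMonomial a (b - 1) (x + v • I)) :=
    funext fun v => (hasDerivAt_starMonomial_im_slice a b hIstar x v).deriv
  simp only [du, dv]
  rw [(((hasDerivAt_starMonomial_re_slice (a - 1) b _ x).fun_const_smul (a : ℝ)).fun_add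
      ((hasDerivAt_starMonomial_re_slice a (b - 1) _ x).fun_const_smul (b : ℝ))).deriv,
    ((((hasDerivAt_starMonomial_im_slice (a - 1) b hIstar x y).fun_const_smul (a : ℝ)).fun_sub
      ((hasDerivAt_starMonomial_im_slice a (b - 1) hIstar x y).fun_const_smul
        (b : ℝ))).const_mul I).deriv,
    hq_slice]
  have hstar_q : star q = x - y • I := by
    rw [← hq_slice, star_add, Quaternion.star_coe, Quaternion.star_smul, hIstar, smul_neg,
      sub_eq_add_neg]
  -- The first-order terms of `□` add up to `b • (star q * starMonomial a (b - 1) q)`, the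
  -- second-order ones to `-(a * b) • starMonomial (a - 1) (b - 1) q` because `I * I = -1`.
  rw [natCast_smul_starMonomial, hstar_q]
  simp only [sub_mul, Quaternion.coe_mul_eq_smul, smul_mul_assoc, mul_add, mul_sub, mul_smul_comm,
    ← mul_assoc, hI2, neg_one_mul, smul_neg, smul_sub, smul_add]
  module

def hermiteCoeff (m n j : ℕ) : ℝ :=
  (-1 : ℝ) ^ j * (Nat.factorial m * Nat.factorial n) /
    (Nat.factorial j * (Nat.factorial (m - j) * Nat.factorial (n - j)))

theorem hermiteCoeff_succ {m n j : ℕ} (hm : j < m) (hn : j < n) :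
    ((j : ℝ) + 1) * hermiteCoeff m n (j + 1)
      = -(((m - j : ℕ) : ℝ) * ((n - j : ℕ) : ℝ) * hermiteCoeff m n j) := by
  obtain ⟨m', rfl⟩ : ∃ m', m = j + 1 + m' := ⟨m - (j + 1), by omega⟩
  obtain ⟨n', rfl⟩ : ∃ n', n = j + 1 + n' := ⟨n - (j + 1), by omega⟩
  have hm' : j + 1 + m' - j = m' + 1 := by omega
  have hn' : j + 1 + n' - j = n' + 1 := by omega
  simp only [hermiteCoeff, hm', hn', Nat.add_sub_cancel_left, Nat.factorial_succ]
  push_cast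
  field_simp
  ring

theorem sum_hermiteCoeff_smul_eq {M : Type*} [AddCommGroup M] [Module ℝ M] (k m : ℕ)
    (P : ℕ → ℕ → M) :
    ∑ j ∈ Finset.range (min k m + 1), hermiteCoeff k m j •
        (((m - j : ℕ) : ℝ) • P (k - j) (m - j)
          - (((k - j : ℕ) : ℝ) * ((m - j : ℕ) : ℝ)) • P (k - j - 1) (m - j - 1))
      = (m : ℝ) • ∑ j ∈ Finset.range (min k m + 1), hermiteCoeff k m j • P (k - j) (m - j) := by
  set n := min k m
  set T : ℕ → M := fun j =>
    (((k - j : ℕ) : ℝ) * ((m - j : ℕ) : ℝ) * hermiteCoeff k m j) • P (k - j - 1) (m - j - 1)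
  have hshift : ∑ j ∈ Finset.range (n + 1), ((j : ℝ) * hermiteCoeff k m j) • P (k - j) (m - j)
      = -∑ j ∈ Finset.range n, T j := by
    rw [Finset.sum_range_succ', ← Finset.sum_neg_distrib]
    simp only [Nat.cast_zero, zero_mul, zero_smul, add_zero]
    refine Finset.sum_congr rfl fun j hj => ?_
    have hj : j < n := Finset.mem_range.mp hj
    rw [Nat.cast_succ, hermiteCoeff_succ (by omega) (by omega), neg_smul]
    simp only [T, Nat.sub_sub]
  have hlast : T n = 0 := by
    rcases (by omega : k - n = 0 ∨ m - n = 0) with h | h <;> simp [T, h]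
  calc _ = (m : ℝ) • ∑ j ∈ Finset.range (n + 1), hermiteCoeff k m j • P (k - j) (m - j)
        - (∑ j ∈ Finset.range (n + 1), ((j : ℝ) * hermiteCoeff k m j) • P (k - j) (m - j)
          + ∑ j ∈ Finset.range (n + 1), T j) := by
        rw [Finset.smul_sum, ← Finset.sum_add_distrib, ← Finset.sum_sub_distrib]
        refine Finset.sum_congr rfl fun j hj => ?_
        have hj : j ≤ m := by have := Finset.mem_range.mp hj; omega
        simp only [T, Nat.cast_sub hj]
        module
    _ = _ := by rw [hshift, Finset.sum_range_succ T n, hlast]; abel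

theorem qHermite_eq_sum_starMonomial (k m : ℕ) :
    qHermite k m
      = ∑ j ∈ Finset.range (min k m + 1), hermiteCoeff k m j • starMonomial (k - j) (m - j) := by
  ext1 p
  simp only [qHermite, qHermite2, hermiteCoeff, starMonomial, Finset.sum_apply, Pi.smul_apply]

/-- The quaternionic Hermite polynomials of second index `m` are
eigenfunctions of `□` on `ℍ∖ℝ` with eigenvalue `m`. -/
theorem stmt7 (k m : ℕ) (q : ℍ[ℝ]) (hq : q.im ≠ 0) :
    Box (fun p => qHermite k m p) q = (m : ℝ) • qHermite k m q := by
  show Box (qHermite k m) q = _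
  rw [qHermite_eq_sum_starMonomial,
    Box_sum _ (fun j => hermiteCoeff k m j • starMonomial (k - j) (m - j)) fun j _ =>
      (contDiff_starMonomial (k - j) (m - j)).const_smul (hermiteCoeff k m j)]
  simp only [Box_const_smul, Box_starMonomial _ _ hq, Finset.sum_apply, Pi.smul_apply]
  exact sum_hermiteCoeff_smul_eq k m fun a b => starMonomial a b q
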